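/- Consider a homogeneous BNPG on the complete graph with n players and fix k with 0 < k < n such that Δg(k) > Δg(k−1). Then a k-PSNE exists if and only if (1) there is no player i with Δg(k−1) < c_i < Δg(k), and (2) the set I = {i : c_i ≤ Δg(k−1)} has exactly k elements. Moreover, if a k-PSNE exists it is unique, and its set of investing players is exactly I. -/

import Mathlib

/-- Finite difference `Δg(m) = g(m+1) − g(m)`. -/
def Δg (g : ℕ → ℝ) (m : ℕ) : ℝ := g (m + 1) - g m

/-- Number of investing neighbors of player `i` under profile `x` in graph `G`. -/
noncomputable def nInv {V : Type*} (G : SimpleGraph V) (x : V → Bool) (i : V) : ℕ :=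
  {j | G.Adj i j ∧ x j = true}.ncard

/-- Pure-strategy Nash equilibrium of the BNPG on `G` with externalities `g` and costs `c`. -/
def IsPSNE {V : Type*} (G : SimpleGraph V) (g : V → ℕ → ℝ) (c : V → ℝ)
    (x : V → Bool) : Prop :=
  ∀ i, (x i = true → c i ≤ Δg (g i) (nInv G x i)) ∧
       (x i = false → Δg (g i) (nInv G x i) ≤ c i)

/-!
On the complete graph every investor sees `k - 1` investing neighbours and every non-investor
sees `k`, so a `k`-PSNE is exactly a profile in which investors have `c i ≤ Δg(k-1)` and
non-investors have `Δg k ≤ c i`. Since `Δg(k-1) < Δg k`, these two cost ranges are disjoint,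
which pins the investors down as `{i | c i ≤ Δg(k-1)}` and leaves no room for a cost strictly
between the two thresholds.
-/

section CompleteGraph

variable {V : Type*}

lemma nInv_top (x : V → Bool) (i : V) :
    nInv (⊤ : SimpleGraph V) x i = ({j | x j = true} \ {i}).ncard := by
  unfold nInv
  congr 1
  ext j
  simp only [Set.mem_ofPred_eq, SimpleGraph.top_adj, Set.mem_sdiff, Set.mem_singleton_iff, ne_comm]
  exact and_comm

lemma nInv_top_of_true [Finite V] {x : V → Bool} {i : V} (hi : x i = true) :
    nInv (⊤ : SimpleGraph V) x i = {j | x j = true}.ncard - 1 := by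
  rw [nInv_top, Set.ncard_sdiff_singleton_of_mem (s := {j | x j = true}) hi]

lemma nInv_top_of_false {x : V → Bool} {i : V} (hi : x i = false) :
    nInv (⊤ : SimpleGraph V) x i = {j | x j = true}.ncard := by
  rw [nInv_top, Set.sdiff_singleton_eq_self (by simp [hi])]

variable [Finite V] {g : ℕ → ℝ} {c : V → ℝ} {k : ℕ}

lemma isPSNE_top_iff_of_ncard {x : V → Bool} (hx : {i | x i = true}.ncard = k) :
    IsPSNE (⊤ : SimpleGraph V) (fun _ => g) c x ↔
      ∀ i, (x i = true → c i ≤ Δg g (k - 1)) ∧ (x i = false → Δg g k ≤ c i) := by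
  refine forall_congr' fun i => and_congr ?_ ?_
  · exact forall_congr' fun hi => by rw [nInv_top_of_true hi, hx]
  · exact forall_congr' fun hi => by rw [nInv_top_of_false hi, hx]

lemma IsPSNE.cost_not_between {x : V → Bool} (hx : IsPSNE (⊤ : SimpleGraph V) (fun _ => g) c x)
    (hk : {i | x i = true}.ncard = k) (i : V) : ¬ (Δg g (k - 1) < c i ∧ c i < Δg g k) := by
  rintro ⟨hlow, hhigh⟩
  have hi := (isPSNE_top_iff_of_ncard hk).1 hx i
  cases hxi : x i
  · exact (hhigh.trans_le (hi.2 hxi)).false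
  · exact (hlow.trans_le (hi.1 hxi)).false

lemma IsPSNE.investors_eq {x : V → Bool} (hΔ : Δg g (k - 1) < Δg g k)
    (hx : IsPSNE (⊤ : SimpleGraph V) (fun _ => g) c x) (hk : {i | x i = true}.ncard = k) :
    {i | x i = true} = {i | c i ≤ Δg g (k - 1)} := by
  ext i
  have hi := (isPSNE_top_iff_of_ncard hk).1 hx i
  cases hxi : x i
  · simpa [hxi] using hΔ.trans_le (hi.2 hxi)
  · simpa [hxi] using hi.1 hxi

lemma isPSNE_top_decide_le (hgap : ∀ i, ¬ (Δg g (k - 1) < c i ∧ c i < Δg g k))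
    (hk : {i | c i ≤ Δg g (k - 1)}.ncard = k) :
    IsPSNE (⊤ : SimpleGraph V) (fun _ => g) c (fun i => decide (c i ≤ Δg g (k - 1))) := by
  refine (isPSNE_top_iff_of_ncard (by simpa using hk)).2 fun i => ⟨fun hi => ?_, fun hi => ?_⟩
  · simpa using hi
  · simp only [decide_eq_false_iff_not, not_le] at hi
    exact not_lt.1 fun hlt => hgap i ⟨hi, hlt⟩

end CompleteGraph

theorem stmt5_general (n k : ℕ)
    (g : ℕ → ℝ) (c : Fin n → ℝ)
    (hΔ : Δg g (k - 1) < Δg g k) :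
    ((∃ x : Fin n → Bool,
        IsPSNE (⊤ : SimpleGraph (Fin n)) (fun _ => g) c x ∧ {i | x i = true}.ncard = k) ↔
      ((∀ i : Fin n, ¬ (Δg g (k - 1) < c i ∧ c i < Δg g k)) ∧
       {i : Fin n | c i ≤ Δg g (k - 1)}.ncard = k)) ∧
    (∀ x y : Fin n → Bool,
      IsPSNE (⊤ : SimpleGraph (Fin n)) (fun _ => g) c x → {i | x i = true}.ncard = k →
      IsPSNE (⊤ : SimpleGraph (Fin n)) (fun _ => g) c y → {i | y i = true}.ncard = k →
      x = y) ∧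
    (∀ x : Fin n → Bool,
      IsPSNE (⊤ : SimpleGraph (Fin n)) (fun _ => g) c x → {i | x i = true}.ncard = k →
      {i | x i = true} = {i : Fin n | c i ≤ Δg g (k - 1)}) := by
  refine ⟨⟨?_, ?_⟩, ?_, fun x hx hk => hx.investors_eq hΔ hk⟩
  · rintro ⟨x, hx, hk⟩
    exact ⟨hx.cost_not_between hk, hx.investors_eq hΔ hk ▸ hk⟩
  · rintro ⟨hgap, hk⟩
    exact ⟨_, isPSNE_top_decide_le hgap hk, by simpa using hk⟩
  · intro x y hx hxk hy hyk
    have hxy := (hx.investors_eq hΔ hxk).trans (hy.investors_eq hΔ hyk).symm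
    exact funext fun i => Bool.eq_iff_iff.2 (Set.ext_iff.1 hxy i)

/-- homogeneous BNPG on the complete graph, `0 < k < n`, `Δg(k) > Δg(k−1)`.
A `k`-PSNE exists iff (1) no player `i` has `Δg(k−1) < c_i < Δg(k)` and
(2) `|{i : c_i ≤ Δg(k−1)}| = k`; moreover a `k`-PSNE is unique if it exists, and its set
of investing players is exactly `{i : c_i ≤ Δg(k−1)}`. -/
theorem stmt5 (n k : ℕ) (hk0 : 0 < k) (hkn : k < n)
    (g : ℕ → ℝ) (hmono : Monotone g) (c : Fin n → ℝ)
    (hΔ : Δg g (k - 1) < Δg g k) :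
    ((∃ x : Fin n → Bool,
        IsPSNE (⊤ : SimpleGraph (Fin n)) (fun _ => g) c x ∧ {i | x i = true}.ncard = k) ↔
      ((∀ i : Fin n, ¬ (Δg g (k - 1) < c i ∧ c i < Δg g k)) ∧
       {i : Fin n | c i ≤ Δg g (k - 1)}.ncard = k)) ∧
    (∀ x y : Fin n → Bool,
      IsPSNE (⊤ : SimpleGraph (Fin n)) (fun _ => g) c x → {i | x i = true}.ncard = k →
      IsPSNE (⊤ : SimpleGraph (Fin n)) (fun _ => g) c y → {i | y i = true}.ncard = k →
      x = y) ∧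
    (∀ x : Fin n → Bool,
      IsPSNE (⊤ : SimpleGraph (Fin n)) (fun _ => g) c x → {i | x i = true}.ncard = k →
      {i | x i = true} = {i : Fin n | c i ≤ Δg g (k - 1)}) :=
  stmt5_general n k g c hΔ
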